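/- arXiv:1310.4710 — 3 statements merged into one kernel-verified Lean document; each statement's English description precedes it below -/
import Mathlib

section
/- Let F ∈ 𝓕, g ∈ L¹(ℝ²) and f ∈ BMO_F(ℝ²). Then the convolution g ∗ f belongs to BMO_F and ‖g ∗ f‖_{BMO_F} ≤ ‖g‖_{L¹}·‖f‖_{BMO_F}. -/
open MeasureTheory Metric Real Filter

noncomputable section

/-- The plane `ℝ²`. -/
abbrev Plane := EuclideanSpace ℝ (Fin 2)

/-- Average of `f` over the ball `B(c,r)` (with respect to Lebesgue measure). -/
def ballAvg (f : Plane → ℝ) (c : Plane) (r : ℝ) : ℝ := ⨍ y in ball c r, f y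

/-- `K` is a bound for all mean oscillations of `f` (i.e. `‖f‖_BMO ≤ K`). -/
def OscBound (f : Plane → ℝ) (K : ℝ) : Prop :=
  ∀ c r, 0 < r → (⨍ y in ball c r, |f y - ballAvg f c r|) ≤ K

/-- The `BMO` seminorm of `f`, as a supremum of mean oscillations. -/
def bmoNorm (f : Plane → ℝ) : ℝ :=
  sSup {m | ∃ c r, 0 < r ∧ m = ⨍ y in ball c r, |f y - ballAvg f c r|}

/-- `K` bounds the second (weighted pair of balls) part of the `BMO_F` norm of `f`. -/
def PairBoundF (F : ℝ → ℝ) (f : Plane → ℝ) (K : ℝ) : Prop :=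
  ∀ c₁ r₁ c₂ r₂, 0 < r₂ → 0 < r₁ → r₁ ≤ 1 → ball c₂ (2 * r₂) ⊆ ball c₁ r₁ →
    |ballAvg f c₂ r₂ - ballAvg f c₁ r₁| ≤ K * F ((1 - Real.log r₂) / (1 - Real.log r₁))

/-- The `BMO_F` norm of `f`. -/
def bmoFNorm (F : ℝ → ℝ) (f : Plane → ℝ) : ℝ :=
  bmoNorm f +
    sSup {m | ∃ c₁ r₁ c₂ r₂, 0 < r₂ ∧ 0 < r₁ ∧ r₁ ≤ 1 ∧ ball c₂ (2 * r₂) ⊆ ball c₁ r₁ ∧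
      m = |ballAvg f c₂ r₂ - ballAvg f c₁ r₁| / F ((1 - Real.log r₂) / (1 - Real.log r₁))}

/-- Membership in the space `BMO_F`. -/
def MemBMOF (F : ℝ → ℝ) (f : Plane → ℝ) : Prop :=
  LocallyIntegrable f volume ∧ ∃ K, OscBound f K ∧ PairBoundF F f K

/-- The `LMO_F` norm of `f`. -/
def lmoFNorm (F : ℝ → ℝ) (f : Plane → ℝ) : ℝ :=
  sSup {m | ∃ c r, 0 < r ∧ r ≤ 1 ∧
      m = F (1 - Real.log r) * ⨍ y in ball c r, |f y - ballAvg f c r|} +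
  sSup {m | ∃ c₁ r₁ c₂ r₂, 0 < r₂ ∧ 0 < r₁ ∧ r₁ ≤ 1 ∧ ball c₂ (2 * r₂) ⊆ ball c₁ r₁ ∧
      m = F (1 - Real.log r₁) * |ballAvg f c₂ r₂ - ballAvg f c₁ r₁|}

/-- Membership in the space `LMO_F`. -/
def MemLMOF (F : ℝ → ℝ) (f : Plane → ℝ) : Prop :=
  LocallyIntegrable f volume ∧ ∃ K,
    (∀ c r, 0 < r → r ≤ 1 →
      F (1 - Real.log r) * ⨍ y in ball c r, |f y - ballAvg f c r| ≤ K) ∧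
    (∀ c₁ r₁ c₂ r₂, 0 < r₂ → 0 < r₁ → r₁ ≤ 1 → ball c₂ (2 * r₂) ⊆ ball c₁ r₁ →
      F (1 - Real.log r₁) * |ballAvg f c₂ r₂ - ballAvg f c₁ r₁| ≤ K)

/-- The `L^∞` norm. -/
def supNorm (f : Plane → ℝ) : ℝ := (eLpNorm f ⊤ volume).toReal

/-- The `L^p` norm for a real exponent `p`. -/
def lpNorm (p : ℝ) (f : Plane → ℝ) : ℝ := (eLpNorm f (ENNReal.ofReal p) volume).toReal

/-- The class `𝓕` of admissible weight functions: nondecreasing on `[1,∞)`, `≥ 1` there,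
blowing up at infinity, with the exponential-integral decay condition and submultiplicativity. -/
def ClassF (F : ℝ → ℝ) : Prop :=
  (∀ x, 1 ≤ x → 1 ≤ F x) ∧ (∀ x y, 1 ≤ x → x ≤ y → F x ≤ F y) ∧
  Tendsto F atTop atTop ∧
  ∃ C, 0 < C ∧
    (∀ l x, 1 ≤ l → l ≤ x →
      (∫ y in Set.Ici x, Real.exp (-y / l) * F y) ≤ C * l * Real.exp (-x / l) * F x) ∧
    (∀ x y, 1 ≤ x → 1 ≤ y → F (x * y) ≤ C * F x * F y)

end

/-- Convolution of `g` and `f` on the plane. -/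
noncomputable def conv (g f : Plane → ℝ) : Plane → ℝ := fun x => ∫ y, g y * f (x - y)

/-!
Ball averages commute with convolution: `⨍_{B(c,r)} g ∗ f = ∫ g(y) ⨍_{B(c-y,r)} f dy`. Hence
every mean oscillation and every difference of two ball averages of `g ∗ f` is bounded by the
integral against `|g|` of the corresponding quantity for `f`, which gives both bounds with the
factor `‖g‖₁`.

This needs Fubini on `B(c,r) × ℝ²`, and `g ∗ f` need not converge. Write `A f(z)` for the
average of `f` over `B(z,1)`. The BMO bound controls `|A f(z) - A f(z')|` by a function of
`|z - z'|`, so `∫ |g(y)| |A f(x-y)| dy` is finite either for every `x` or for none, while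
`∫ |g(y)| |f(x-y) - A f(x-y)| dy` is locally integrable in `x`. In the first case Fubini applies
on every ball; in the second the integral defining `(g ∗ f)(x)` diverges for almost every `x`,
so `conv g f` (a Bochner integral, hence `0` where not integrable) vanishes almost everywhere and
the bounds are trivial.
-/

open scoped ENNReal

section Translation

variable {E : Type*} [NormedAddCommGroup E]

lemma ball_sub_subset_ball_sub {a b : E} {r s : ℝ} (h : ball a r ⊆ ball b s) (y : E) :
    ball (a - y) r ⊆ ball (b - y) s := by
  rw [← preimage_add_right_ball, ← preimage_add_right_ball]
  exact Set.preimage_mono h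

lemma preimage_sub_right_ball (c y : E) (r : ℝ) : (· - y) ⁻¹' ball (c - y) r = ball c r := by
  simp [sub_eq_add_neg]

variable [MeasurableSpace E] [MeasurableAdd E] (μ : Measure E) [μ.IsAddRightInvariant]

lemma setLIntegral_ball_comp_sub_right (H : E → ℝ≥0∞) (c y : E) (r : ℝ) :
    ∫⁻ x in ball c r, H (x - y) ∂μ = ∫⁻ z in ball (c - y) r, H z ∂μ := by
  rw [← preimage_sub_right_ball c y r]
  exact (measurePreserving_sub_right μ y).setLIntegral_comp_preimage_emb
    (MeasurableEquiv.subRight y).measurableEmbedding H _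

lemma setIntegral_ball_comp_sub_right (H : E → ℝ) (c y : E) (r : ℝ) :
    ∫ x in ball c r, H (x - y) ∂μ = ∫ z in ball (c - y) r, H z ∂μ := by
  rw [← preimage_sub_right_ball c y r]
  exact (measurePreserving_sub_right μ y).setIntegral_preimage_emb
    (MeasurableEquiv.subRight y).measurableEmbedding H _

end Translation

lemma le_of_ball_subset_ball {E : Type*} [NormedAddCommGroup E] [NormedSpace ℝ E] [Nontrivial E]
    {a b : E} {r s : ℝ} (hr : 0 < r) (h : ball a r ⊆ ball b s) : r ≤ s := by
  have hs : 0 ≤ s := (dist_nonneg.trans_lt (h (mem_ball_self hr))).le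
  have := diam_mono h isBounded_ball
  rw [diam_ball_eq a hr.le, diam_ball_eq b hs] at this
  linarith

noncomputable def ballVolume (r : ℝ) : ℝ := volume.real (ball (0 : Plane) r)

section BallAverages

variable {f h : Plane → ℝ} {K r s : ℝ}

lemma measureReal_ball_eq_ballVolume (c : Plane) (r : ℝ) : volume.real (ball c r) = ballVolume r :=
  Measure.addHaar_real_ball_center volume c r

lemma ballVolume_pos (hr : 0 < r) : 0 < ballVolume r :=
  ENNReal.toReal_pos (measure_ball_pos _ _ hr).ne' measure_ball_lt_top.ne

lemma ballVolume_mono (hrs : r ≤ s) : ballVolume r ≤ ballVolume s :=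
  measureReal_mono (ball_subset_ball hrs)

lemma setAverage_ball_eq (h : Plane → ℝ) (c : Plane) (r : ℝ) :
    ⨍ x in ball c r, h x = (ballVolume r)⁻¹ * ∫ x in ball c r, h x := by
  rw [setAverage_eq, measureReal_ball_eq_ballVolume, smul_eq_mul]

lemma integral_ball_eq_ballVolume_mul (h : Plane → ℝ) (c : Plane) (hr : 0 < r) :
    ∫ x in ball c r, h x = ballVolume r * ballAvg h c r := by
  rw [ballAvg, setAverage_ball_eq, mul_inv_cancel_left₀ (ballVolume_pos hr).ne']

lemma MeasureTheory.LocallyIntegrable.integrableOn_ball (hf : LocallyIntegrable f volume)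
    (c : Plane) (r : ℝ) :
    IntegrableOn f (ball c r) volume :=
  (hf.integrableOn_isCompact (isCompact_closedBall c r)).mono_set ball_subset_closedBall

lemma OscBound.nonneg (hK : OscBound f K) : 0 ≤ K := by
  refine le_trans ?_ (hK 0 1 one_pos)
  rw [setAverage_ball_eq]
  exact mul_nonneg (inv_nonneg.2 measureReal_nonneg)
    (setIntegral_nonneg measurableSet_ball fun _ _ => abs_nonneg _)

lemma OscBound.setIntegral_le (hK : OscBound f K) (c : Plane) (hr : 0 < r) :
    ∫ y in ball c r, |f y - ballAvg f c r| ≤ ballVolume r * K :=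
  (integral_ball_eq_ballVolume_mul _ c hr).trans_le
    (mul_le_mul_of_nonneg_left (hK c r hr) (ballVolume_pos hr).le)

lemma OscBound.abs_ballAvg_sub_le (hfL : LocallyIntegrable f volume) (hK : OscBound f K)
    {c₁ c₂ : Plane} {r₁ r₂ : ℝ} (hr₁ : 0 < r₁) (hr₂ : 0 < r₂)
    (hsub : ball c₂ r₂ ⊆ ball c₁ r₁) :
    |ballAvg f c₂ r₂ - ballAvg f c₁ r₁| ≤ ballVolume r₁ / ballVolume r₂ * K := by
  set C := ballAvg f c₁ r₁
  have hV := ballVolume_pos hr₂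
  have hC : ∀ (c : Plane) r, IntegrableOn (fun _ => C) (ball c r) volume :=
    fun c r => integrableOn_const measure_ball_lt_top.ne
  have key : ballVolume r₂ * |ballAvg f c₂ r₂ - C| ≤ ballVolume r₁ * K := calc
    ballVolume r₂ * |ballAvg f c₂ r₂ - C| = |∫ x in ball c₂ r₂, (f x - C)| := by
      rw [integral_sub (hfL.integrableOn_ball c₂ r₂) (hC c₂ r₂),
        integral_ball_eq_ballVolume_mul f c₂ hr₂, setIntegral_const,
        measureReal_ball_eq_ballVolume, smul_eq_mul, ← mul_sub, abs_mul, abs_of_pos hV]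
    _ ≤ ∫ x in ball c₂ r₂, |f x - C| := abs_integral_le_integral_abs
    _ ≤ ∫ x in ball c₁ r₁, |f x - C| :=
      setIntegral_mono_set ((hfL.integrableOn_ball c₁ r₁).sub (hC c₁ r₁)).abs
        (Eventually.of_forall fun _ => abs_nonneg _) hsub.eventuallyLE
    _ ≤ ballVolume r₁ * K := hK.setIntegral_le c₁ hr₁
  rw [div_mul_eq_mul_div, le_div_iff₀ hV]
  linarith

lemma OscBound.abs_ballAvg_one_sub_le (hfL : LocallyIntegrable f volume) (hK : OscBound f K)
    (z z' : Plane) :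
    |ballAvg f z 1 - ballAvg f z' 1| ≤ 2 * (ballVolume (dist z z' + 1) / ballVolume 1) * K := by
  have hR : 0 < dist z z' + 1 := by positivity
  have h₁ : ball z 1 ⊆ ball z (dist z z' + 1) :=
    ball_subset_ball (by linarith [dist_nonneg (x := z) (y := z')])
  have h₂ : ball z' 1 ⊆ ball z (dist z z' + 1) := ball_subset_ball' (by rw [dist_comm, add_comm])
  have := abs_sub_le (ballAvg f z 1) (ballAvg f z (dist z z' + 1)) (ballAvg f z' 1)
  rw [abs_sub_comm (ballAvg f z (dist z z' + 1))] at this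
  linarith [hK.abs_ballAvg_sub_le hfL hR one_pos h₁, hK.abs_ballAvg_sub_le hfL hR one_pos h₂]

lemma aemeasurable_ballAvg (hf : AEStronglyMeasurable f volume) (r : ℝ) :
    AEMeasurable (fun z => ballAvg f z r) volume := by
  set S := {q : Plane × Plane | dist q.2 q.1 < r}
  have hS : MeasurableSet S := measurableSet_lt (by fun_prop) measurable_const
  have hind : AEStronglyMeasurable (S.indicator fun q => f q.2) (volume.prod volume) :=
    hf.comp_snd.indicator hS
  have heq : (fun z => ballAvg f z r) =
      fun z => (ballVolume r)⁻¹ * ∫ x, S.indicator (fun q => f q.2) (z, x) := by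
    ext z
    rw [ballAvg, setAverage_ball_eq, ← integral_indicator measurableSet_ball]
    rfl
  rw [heq]
  exact (hind.integral_prod_right'.aemeasurable).const_mul _

lemma ballAvg_eq_zero_of_ae_eq_zero (h0 : h =ᵐ[volume] 0) (c : Plane) (r : ℝ) :
    ballAvg h c r = 0 := by
  rw [ballAvg, average_congr (ae_restrict_of_ae h0)]
  simp

lemma oscBound_of_ae_eq_zero (h0 : h =ᵐ[volume] 0) (hK : 0 ≤ K) : OscBound h K := by
  intro c r _
  have habs : (fun x => |h x - ballAvg h c r|) =ᵐ[volume] 0 :=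
    h0.mono fun x hx => by simp [hx, ballAvg_eq_zero_of_ae_eq_zero h0]
  rw [average_congr (ae_restrict_of_ae habs)]
  simpa using hK

end BallAverages

section Majorants

variable {f g : Plane → ℝ} {K r : ℝ}

lemma enorm_le_enorm_add_ofReal {a b c : ℝ} (h : |a - b| ≤ c) :
    ‖a‖ₑ ≤ ‖b‖ₑ + ENNReal.ofReal c := calc
  ‖a‖ₑ = ‖b + (a - b)‖ₑ := by rw [add_sub_cancel]
  _ ≤ ‖b‖ₑ + ‖a - b‖ₑ := enorm_add_le _ _
  _ ≤ ‖b‖ₑ + ENNReal.ofReal c := by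
    rw [Real.enorm_eq_ofReal_abs (a - b)]
    gcongr

lemma aemeasurable_comp_sub_prod {β : Type*} [MeasurableSpace β] {φ : Plane → β}
    (hφ : AEMeasurable φ volume) (s : Set Plane) :
    AEMeasurable (fun p : Plane × Plane => φ (p.1 - p.2)) ((volume.restrict s).prod volume) :=
  hφ.comp_quasiMeasurePreserving <| (quasiMeasurePreserving_sub volume volume).mono
    (Measure.restrict_le_self.absolutelyContinuous.prod .rfl) .rfl

lemma aemeasurable_enorm_mul_comp_sub_prod (hg : AEMeasurable g volume) {φ : Plane → ℝ}
    (hφ : AEMeasurable φ volume) (s : Set Plane) :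
    AEMeasurable (fun p : Plane × Plane => ‖g p.2‖ₑ * ‖φ (p.1 - p.2)‖ₑ)
      ((volume.restrict s).prod volume) :=
  hg.comp_snd.enorm.mul (aemeasurable_comp_sub_prod hφ s).enorm

lemma aemeasurable_sub_ballAvg (hfL : LocallyIntegrable f volume) :
    AEMeasurable (fun z => f z - ballAvg f z 1) volume :=
  hfL.aestronglyMeasurable.aemeasurable.sub (aemeasurable_ballAvg hfL.aestronglyMeasurable 1)

noncomputable def avgMajorant (g f : Plane → ℝ) (x : Plane) : ℝ≥0∞ :=
  ∫⁻ y, ‖g y‖ₑ * ‖ballAvg f (x - y) 1‖ₑ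

noncomputable def oscMajorant (g f : Plane → ℝ) (x : Plane) : ℝ≥0∞ :=
  ∫⁻ y, ‖g y‖ₑ * ‖f (x - y) - ballAvg f (x - y) 1‖ₑ

namespace OscBound

variable (hfL : LocallyIntegrable f volume) (hK : OscBound f K)
include hfL hK

lemma avgMajorant_le (hg : AEMeasurable g volume) (x x' : Plane) :
    avgMajorant g f x ≤ avgMajorant g f x' +
      ENNReal.ofReal (2 * (ballVolume (dist x x' + 1) / ballVolume 1) * K) * ∫⁻ y, ‖g y‖ₑ := by
  set ω := 2 * (ballVolume (dist x x' + 1) / ballVolume 1) * K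
  calc avgMajorant g f x
      ≤ ∫⁻ y, (‖g y‖ₑ * ‖ballAvg f (x' - y) 1‖ₑ + ENNReal.ofReal ω * ‖g y‖ₑ) := by
        refine lintegral_mono fun y => ?_
        have h := hK.abs_ballAvg_one_sub_le hfL (x - y) (x' - y)
        rw [dist_sub_right] at h
        calc ‖g y‖ₑ * ‖ballAvg f (x - y) 1‖ₑ
            ≤ ‖g y‖ₑ * (‖ballAvg f (x' - y) 1‖ₑ + ENNReal.ofReal ω) := by
              gcongr
              exact enorm_le_enorm_add_ofReal h
          _ = _ := by ring
    _ = _ := by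
      rw [lintegral_add_right' _ (hg.enorm.const_mul _),
        lintegral_const_mul' _ _ ENNReal.ofReal_ne_top]
      rfl

lemma avgMajorant_lt_top (hg : Integrable g volume) {x₀ : Plane}
    (hW : avgMajorant g f x₀ < ∞) (x : Plane) : avgMajorant g f x < ∞ :=
  (hK.avgMajorant_le hfL hg.aemeasurable x x₀).trans_lt
    (ENNReal.add_lt_top.2 ⟨hW, ENNReal.mul_lt_top ENNReal.ofReal_lt_top hg.2⟩)

lemma setLIntegral_avgMajorant_lt_top (hg : Integrable g volume) {c : Plane}
    (hW : avgMajorant g f c < ∞) : ∫⁻ x in ball c r, avgMajorant g f x < ∞ := by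
  have hB : ∀ x ∈ ball c r, avgMajorant g f x ≤ avgMajorant g f c +
      ENNReal.ofReal (2 * (ballVolume (r + 1) / ballVolume 1) * K) * ∫⁻ y, ‖g y‖ₑ := by
    intro x hx
    refine (hK.avgMajorant_le hfL hg.aemeasurable x c).trans ?_
    have hK0 := hK.nonneg
    have hV1 := ballVolume_pos one_pos
    gcongr
    exact ballVolume_mono (by linarith [mem_ball.1 hx])
  refine (setLIntegral_mono' measurableSet_ball hB).trans_lt ?_
  rw [setLIntegral_const]
  exact ENNReal.mul_lt_top
    (ENNReal.add_lt_top.2 ⟨hW, ENNReal.mul_lt_top ENNReal.ofReal_lt_top hg.2⟩) measure_ball_lt_top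

lemma setLIntegral_enorm_sub_ballAvg_one_le (hr : 0 < r) (z₀ : Plane) :
    ∫⁻ z in ball z₀ r, ‖f z - ballAvg f z 1‖ₑ ≤
      ENNReal.ofReal ((1 + ballVolume r / ballVolume 1) * ballVolume (r + 1) * K) := by
  set C := ballAvg f z₀ (r + 1)
  set δ := ballVolume (r + 1) / ballVolume 1 * K
  have hr1 : 0 < r + 1 := by linarith
  have hδ : 0 ≤ δ :=
    mul_nonneg (div_nonneg (ballVolume_pos hr1).le (ballVolume_pos one_pos).le) hK.nonneg
  have hnear : ∀ z ∈ ball z₀ r, ‖f z - ballAvg f z 1‖ₑ ≤ ‖f z - C‖ₑ + ENNReal.ofReal δ := by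
    intro z hz
    refine enorm_le_enorm_add_ofReal ?_
    rw [sub_sub_sub_cancel_left, abs_sub_comm]
    exact hK.abs_ballAvg_sub_le hfL hr1 one_pos (ball_subset_ball' (by linarith [mem_ball.1 hz]))
  have hfar : ∫⁻ z in ball z₀ (r + 1), ‖f z - C‖ₑ ≤ ENNReal.ofReal (ballVolume (r + 1) * K) := by
    have hint : IntegrableOn (fun z => f z - C) (ball z₀ (r + 1)) volume :=
      (hfL.integrableOn_ball z₀ (r + 1)).sub (integrableOn_const measure_ball_lt_top.ne)
    rw [← ofReal_integral_norm_eq_lintegral_enorm hint]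
    exact ENNReal.ofReal_le_ofReal (by simpa only [Real.norm_eq_abs] using hK.setIntegral_le z₀ hr1)
  calc ∫⁻ z in ball z₀ r, ‖f z - ballAvg f z 1‖ₑ
      ≤ ∫⁻ z in ball z₀ r, (‖f z - C‖ₑ + ENNReal.ofReal δ) :=
        setLIntegral_mono' measurableSet_ball hnear
    _ = (∫⁻ z in ball z₀ r, ‖f z - C‖ₑ) + ENNReal.ofReal δ * volume (ball z₀ r) := by
        rw [lintegral_add_right' _ aemeasurable_const, setLIntegral_const]
    _ ≤ ENNReal.ofReal (ballVolume (r + 1) * K) + ENNReal.ofReal (δ * ballVolume r) := by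
        gcongr
        · exact (lintegral_mono_set (ball_subset_ball (by linarith))).trans hfar
        · rw [ENNReal.ofReal_mul hδ, ← measureReal_ball_eq_ballVolume z₀,
            ofReal_measureReal measure_ball_lt_top.ne]
    _ = _ := by
        rw [← ENNReal.ofReal_add (mul_nonneg (ballVolume_pos hr1).le hK.nonneg)
          (mul_nonneg hδ (ballVolume_pos hr).le)]
        congr 1
        ring

lemma setLIntegral_oscMajorant_le (hg : AEMeasurable g volume) (c : Plane) (hr : 0 < r) :
    ∫⁻ x in ball c r, oscMajorant g f x ≤
      ENNReal.ofReal ((1 + ballVolume r / ballVolume 1) * ballVolume (r + 1) * K) *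
        ∫⁻ y, ‖g y‖ₑ := by
  calc ∫⁻ x in ball c r, oscMajorant g f x
      = ∫⁻ y, ∫⁻ x in ball c r, ‖g y‖ₑ * ‖f (x - y) - ballAvg f (x - y) 1‖ₑ :=
        lintegral_lintegral_swap
          (aemeasurable_enorm_mul_comp_sub_prod hg (aemeasurable_sub_ballAvg hfL) (ball c r))
    _ ≤ ∫⁻ y, ENNReal.ofReal ((1 + ballVolume r / ballVolume 1) * ballVolume (r + 1) * K) *
          ‖g y‖ₑ := by
        refine lintegral_mono fun y => ?_
        rw [lintegral_const_mul' _ _ enorm_ne_top, mul_comm,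
          setLIntegral_ball_comp_sub_right volume (fun z => ‖f z - ballAvg f z 1‖ₑ)]
        gcongr
        exact hK.setLIntegral_enorm_sub_ballAvg_one_le hfL hr (c - y)
    _ = _ := lintegral_const_mul' _ _ ENNReal.ofReal_ne_top

lemma ae_oscMajorant_lt_top (hg : Integrable g volume) : ∀ᵐ x, oscMajorant g f x < ∞ := by
  have hball : ∀ n : ℕ, ∀ᵐ x ∂volume.restrict (ball (0 : Plane) (n + 1)),
      oscMajorant g f x < ∞ := fun n =>
    ae_lt_top' (aemeasurable_enorm_mul_comp_sub_prod hg.aemeasurable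
        (aemeasurable_sub_ballAvg hfL) _).lintegral_prod_right'
      ((hK.setLIntegral_oscMajorant_le hfL hg.aemeasurable 0 (by positivity)).trans_lt
        (ENNReal.mul_lt_top ENNReal.ofReal_lt_top hg.2)).ne
  rwa [← ae_restrict_iUnion_iff, iUnion_ball_nat_succ, Measure.restrict_univ] at hball

end OscBound

end Majorants

section Convolution

variable {f g : Plane → ℝ} {K N r : ℝ}

def ConvIntegrableOnBalls (g f : Plane → ℝ) : Prop :=
  ∀ (c : Plane) (r : ℝ), 0 < r → Integrable (fun p : Plane × Plane => g p.2 * f (p.1 - p.2))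
    ((volume.restrict (ball c r)).prod volume)

namespace OscBound

variable (hfL : LocallyIntegrable f volume) (hK : OscBound f K)
include hfL hK

lemma convIntegrableOnBalls (hg : Integrable g volume) (hW : avgMajorant g f 0 < ∞) :
    ConvIntegrableOnBalls g f := by
  intro c r hr
  have hosc := aemeasurable_enorm_mul_comp_sub_prod hg.aemeasurable
    (aemeasurable_sub_ballAvg hfL) (ball c r)
  have havg := aemeasurable_enorm_mul_comp_sub_prod hg.aemeasurable
    (aemeasurable_ballAvg hfL.aestronglyMeasurable 1) (ball c r)
  refine ⟨(hg.aemeasurable.comp_snd.mul (aemeasurable_comp_sub_prod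
    hfL.aestronglyMeasurable.aemeasurable _)).aestronglyMeasurable, ?_⟩
  calc ∫⁻ p, ‖g p.2 * f (p.1 - p.2)‖ₑ ∂(volume.restrict (ball c r)).prod volume
      ≤ ∫⁻ p, (‖g p.2‖ₑ * ‖f (p.1 - p.2) - ballAvg f (p.1 - p.2) 1‖ₑ +
          ‖g p.2‖ₑ * ‖ballAvg f (p.1 - p.2) 1‖ₑ) ∂(volume.restrict (ball c r)).prod volume := by
        refine lintegral_mono fun p => ?_
        rw [enorm_mul, ← mul_add]
        gcongr
        exact (enorm_add_le _ _).trans_eq' (by rw [sub_add_cancel])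
    _ = (∫⁻ x in ball c r, oscMajorant g f x) + ∫⁻ x in ball c r, avgMajorant g f x := by
        rw [lintegral_add_left' hosc, lintegral_prod _ hosc, lintegral_prod _ havg]
        rfl
    _ < ∞ := ENNReal.add_lt_top.2
        ⟨(hK.setLIntegral_oscMajorant_le hfL hg.aemeasurable c hr).trans_lt
          (ENNReal.mul_lt_top ENNReal.ofReal_lt_top hg.2),
        hK.setLIntegral_avgMajorant_lt_top hfL hg (hK.avgMajorant_lt_top hfL hg hW c)⟩

lemma conv_ae_eq_zero (hg : Integrable g volume) (hW : avgMajorant g f 0 = ∞) :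
    conv g f =ᵐ[volume] 0 := by
  filter_upwards [hK.ae_oscMajorant_lt_top hfL hg] with x hU
  refine integral_undef fun hint => ?_
  have hWx : avgMajorant g f x = ∞ := by
    by_contra h
    exact (hK.avgMajorant_lt_top hfL hg (lt_top_iff_ne_top.2 h) 0).ne hW
  have hle : avgMajorant g f x ≤ (∫⁻ y, ‖g y * f (x - y)‖ₑ) + oscMajorant g f x := calc
    avgMajorant g f x ≤ ∫⁻ y, (‖g y * f (x - y)‖ₑ +
        ‖g y‖ₑ * ‖f (x - y) - ballAvg f (x - y) 1‖ₑ) := by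
      refine lintegral_mono fun y => ?_
      rw [enorm_mul, ← mul_add]
      gcongr
      exact (enorm_sub_le).trans_eq' (by rw [sub_sub_cancel])
    _ = _ := lintegral_add_left' hint.aemeasurable.enorm _
  exact (hle.trans_lt (ENNReal.add_lt_top.2 ⟨hint.2, hU⟩)).ne hWx

lemma convIntegrableOnBalls_or_conv_ae_eq_zero (hg : Integrable g volume) :
    ConvIntegrableOnBalls g f ∨ conv g f =ᵐ[volume] 0 :=
  (le_top : avgMajorant g f 0 ≤ ∞).lt_or_eq.imp (hK.convIntegrableOnBalls hfL hg)
    (hK.conv_ae_eq_zero hfL hg)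

end OscBound

lemma setIntegral_ball_mul_comp_sub (g f : Plane → ℝ) (c y : Plane) (hr : 0 < r) :
    ∫ x in ball c r, g y * f (x - y) = ballVolume r * (g y * ballAvg f (c - y) r) := by
  rw [integral_const_mul, setIntegral_ball_comp_sub_right volume f c y r,
    integral_ball_eq_ballVolume_mul f (c - y) hr, mul_left_comm]

namespace ConvIntegrableOnBalls

variable (hI : ConvIntegrableOnBalls g f)
include hI

lemma integrableOn_conv (c : Plane) (hr : 0 < r) : IntegrableOn (conv g f) (ball c r) volume :=
  (hI c r hr).integral_prod_left

lemma locallyIntegrable_conv : LocallyIntegrable (conv g f) volume :=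
  fun x => ⟨ball x 1, ball_mem_nhds x one_pos, hI.integrableOn_conv x one_pos⟩

lemma integrable_mul_ballAvg (c : Plane) (hr : 0 < r) :
    Integrable (fun y => g y * ballAvg f (c - y) r) volume := by
  refine (((hI c r hr).integral_prod_right).const_mul (ballVolume r)⁻¹).congr
    (Eventually.of_forall fun y => ?_)
  simp only [setIntegral_ball_mul_comp_sub g f c y hr, inv_mul_cancel_left₀ (ballVolume_pos hr).ne']

lemma ballAvg_conv (c : Plane) (hr : 0 < r) :
    ballAvg (conv g f) c r = ∫ y, g y * ballAvg f (c - y) r := by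
  rw [ballAvg, setAverage_ball_eq]
  simp only [conv]
  rw [integral_integral_swap (hI c r hr)]
  simp only [setIntegral_ball_mul_comp_sub g f c _ hr]
  rw [integral_const_mul, inv_mul_cancel_left₀ (ballVolume_pos hr).ne']

lemma oscBound_conv (hg : Integrable g volume) (hN : OscBound f N) :
    OscBound (conv g f) ((∫ y, |g y|) * N) := by
  intro c r hr
  have : IsFiniteMeasure (volume.restrict (ball c r)) :=
    isFiniteMeasure_restrict.2 measure_ball_lt_top.ne
  have hΦ : Integrable (fun p : Plane × Plane => |g p.2| * |f (p.1 - p.2) - ballAvg f (c - p.2) r|)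
      ((volume.restrict (ball c r)).prod volume) :=
    ((hI c r hr).sub ((hI.integrable_mul_ballAvg c hr).comp_snd _)).norm.congr
      (Eventually.of_forall fun p => by
        simp only [Pi.sub_apply, Real.norm_eq_abs, ← mul_sub, abs_mul])
  have hpt : ∀ᵐ x ∂volume.restrict (ball c r),
      |conv g f x - ballAvg (conv g f) c r| ≤ ∫ y, |g y| * |f (x - y) - ballAvg f (c - y) r| := by
    filter_upwards [(hI c r hr).prod_right_ae] with x hx
    rw [hI.ballAvg_conv c hr, conv, ← integral_sub hx (hI.integrable_mul_ballAvg c hr)]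
    refine abs_integral_le_integral_abs.trans_eq ?_
    simp only [← mul_sub, abs_mul]
  have hint : ∫ x in ball c r, |conv g f x - ballAvg (conv g f) c r| ≤
      ballVolume r * ((∫ y, |g y|) * N) := calc
    ∫ x in ball c r, |conv g f x - ballAvg (conv g f) c r|
        ≤ ∫ x in ball c r, ∫ y, |g y| * |f (x - y) - ballAvg f (c - y) r| :=
      integral_mono_of_nonneg (Eventually.of_forall fun _ => abs_nonneg _)
        hΦ.integral_prod_left hpt
    _ = ∫ y, |g y| * ∫ z in ball (c - y) r, |f z - ballAvg f (c - y) r| := by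
      rw [integral_integral_swap hΦ]
      congr 1 with y
      rw [integral_const_mul,
        setIntegral_ball_comp_sub_right volume (fun z => |f z - ballAvg f (c - y) r|)]
    _ ≤ ∫ y, |g y| * (ballVolume r * N) :=
      integral_mono_of_nonneg (Eventually.of_forall fun y => mul_nonneg (abs_nonneg _)
          (setIntegral_nonneg measurableSet_ball fun _ _ => abs_nonneg _))
        (hg.abs.mul_const _) (Eventually.of_forall fun y =>
          mul_le_mul_of_nonneg_left (hN.setIntegral_le (c - y) hr) (abs_nonneg _))
    _ = ballVolume r * ((∫ y, |g y|) * N) := by rw [integral_mul_const]; ring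
  rw [setAverage_ball_eq, inv_mul_le_iff₀ (ballVolume_pos hr)]
  exact hint

lemma pairBoundF_conv (hg : Integrable g volume) {F : ℝ → ℝ} (hN : PairBoundF F f N) :
    PairBoundF F (conv g f) ((∫ y, |g y|) * N) := by
  intro c₁ r₁ c₂ r₂ hr₂ hr₁ hr₁1 hsub
  rw [hI.ballAvg_conv c₂ hr₂, hI.ballAvg_conv c₁ hr₁,
    ← integral_sub (hI.integrable_mul_ballAvg c₂ hr₂) (hI.integrable_mul_ballAvg c₁ hr₁),
    mul_assoc, ← integral_mul_const]
  refine abs_integral_le_integral_abs.trans (integral_mono_of_nonneg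
    (Eventually.of_forall fun _ => abs_nonneg _) (hg.abs.mul_const _)
    (Eventually.of_forall fun y => ?_))
  dsimp only
  rw [← mul_sub, abs_mul]
  exact mul_le_mul_of_nonneg_left
    (hN _ _ _ _ hr₂ hr₁ hr₁1 (ball_sub_subset_ball_sub hsub y)) (abs_nonneg _)

end ConvIntegrableOnBalls

variable (hfL : LocallyIntegrable f volume) (hg : Integrable g volume)
include hfL hg

lemma OscBound.locallyIntegrable_conv (hK : OscBound f K) :
    LocallyIntegrable (conv g f) volume := by
  rcases hK.convIntegrableOnBalls_or_conv_ae_eq_zero hfL hg with hI | h0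
  · exact hI.locallyIntegrable_conv
  · exact (locallyIntegrable_const 0).congr h0.symm

lemma oscBound_conv (hN : OscBound f N) : OscBound (conv g f) ((∫ y, |g y|) * N) := by
  rcases hN.convIntegrableOnBalls_or_conv_ae_eq_zero hfL hg with hI | h0
  · exact hI.oscBound_conv hg hN
  · exact oscBound_of_ae_eq_zero h0 (mul_nonneg (integral_nonneg fun _ => abs_nonneg _) hN.nonneg)

lemma pairBoundF_conv (hK : OscBound f K) {F : ℝ → ℝ} (hN : PairBoundF F f N) :
    PairBoundF F (conv g f) ((∫ y, |g y|) * N) := by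
  rcases hK.convIntegrableOnBalls_or_conv_ae_eq_zero hfL hg with hI | h0
  · exact hI.pairBoundF_conv hg hN
  · intro c₁ r₁ c₂ r₂ hr₂ hr₁ hr₁1 hsub
    rw [ballAvg_eq_zero_of_ae_eq_zero h0, ballAvg_eq_zero_of_ae_eq_zero h0, sub_zero, abs_zero,
      mul_assoc]
    exact mul_nonneg (integral_nonneg fun _ => abs_nonneg _)
      ((abs_nonneg _).trans (hN c₁ r₁ c₂ r₂ hr₂ hr₁ hr₁1 hsub))

end Convolution

lemma one_le_log_ratio {E : Type*} [NormedAddCommGroup E] [NormedSpace ℝ E] [Nontrivial E]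
    {c₁ c₂ : E} {r₁ r₂ : ℝ} (hr₂ : 0 < r₂) (hr₁1 : r₁ ≤ 1)
    (hsub : ball c₂ (2 * r₂) ⊆ ball c₁ r₁) : 1 ≤ (1 - log r₂) / (1 - log r₁) := by
  have h := le_of_ball_subset_ball (by positivity) hsub
  have hlog₁ : log r₁ ≤ 0 := log_nonpos (by linarith) hr₁1
  have hlog : log r₂ ≤ log r₁ := log_le_log hr₂ (by linarith)
  rw [le_div_iff₀ (by linarith)]
  linarith

section Norms

variable {F : ℝ → ℝ} {f : Plane → ℝ} {A B K : ℝ}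

def pairRatios (F : ℝ → ℝ) (f : Plane → ℝ) : Set ℝ :=
  {m | ∃ c₁ r₁ c₂ r₂, 0 < r₂ ∧ 0 < r₁ ∧ r₁ ≤ 1 ∧ ball c₂ (2 * r₂) ⊆ ball c₁ r₁ ∧
    m = |ballAvg f c₂ r₂ - ballAvg f c₁ r₁| / F ((1 - Real.log r₂) / (1 - Real.log r₁))}

lemma bmoFNorm_eq (F : ℝ → ℝ) (f : Plane → ℝ) :
    bmoFNorm F f = bmoNorm f + sSup (pairRatios F f) := rfl

lemma pairRatios_nonempty : (pairRatios F f).Nonempty :=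
  ⟨_, 0, 1, 0, 1 / 4, by norm_num, one_pos, le_rfl, ball_subset_ball (by norm_num), rfl⟩

lemma oscBound_bmoNorm (hK : OscBound f K) : OscBound f (bmoNorm f) := fun c r hr =>
  le_csSup ⟨K, by rintro _ ⟨c, r, hr, rfl⟩; exact hK c r hr⟩ ⟨c, r, hr, rfl⟩

variable (hF : ∀ x, 1 ≤ x → 1 ≤ F x)
include hF

lemma PairBoundF.mem_upperBounds (hK : PairBoundF F f K) : K ∈ upperBounds (pairRatios F f) := by
  rintro _ ⟨c₁, r₁, c₂, r₂, hr₂, hr₁, hr₁1, hsub, rfl⟩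
  rw [div_le_iff₀ (one_pos.trans_le (hF _ (one_le_log_ratio hr₂ hr₁1 hsub)))]
  exact hK c₁ r₁ c₂ r₂ hr₂ hr₁ hr₁1 hsub

lemma PairBoundF.sSup_pairRatios (hK : PairBoundF F f K) :
    PairBoundF F f (sSup (pairRatios F f)) := by
  intro c₁ r₁ c₂ r₂ hr₂ hr₁ hr₁1 hsub
  rw [← div_le_iff₀ (one_pos.trans_le (hF _ (one_le_log_ratio hr₂ hr₁1 hsub)))]
  exact le_csSup ⟨K, hK.mem_upperBounds hF⟩ ⟨c₁, r₁, c₂, r₂, hr₂, hr₁, hr₁1, hsub, rfl⟩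

lemma bmoFNorm_le (h₀ : OscBound f A) (h₁ : PairBoundF F f B) : bmoFNorm F f ≤ A + B :=
  add_le_add (csSup_le ⟨_, 0, 1, one_pos, rfl⟩ (by rintro _ ⟨c, r, hr, rfl⟩; exact h₀ c r hr))
    (csSup_le pairRatios_nonempty (h₁.mem_upperBounds hF))

end Norms

/-- For `F ∈ 𝓕`, `g ∈ L¹` and `f ∈ BMO_F`, the convolution `g ∗ f`
belongs to `BMO_F` with `‖g ∗ f‖_{BMO_F} ≤ ‖g‖_{L¹} ‖f‖_{BMO_F}`. -/
theorem convolution_bmoF (F : ℝ → ℝ) (hF : ClassF F)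
    (g f : Plane → ℝ) (hg : MeasureTheory.Integrable g volume) (hf : MemBMOF F f) :
    MemBMOF F (conv g f) ∧ bmoFNorm F (conv g f) ≤ (∫ y, |g y|) * bmoFNorm F f := by
  obtain ⟨hfL, K, hK, hP⟩ := hf
  refine ⟨⟨hK.locallyIntegrable_conv hfL hg, (∫ y, |g y|) * K, oscBound_conv hfL hg hK,
    pairBoundF_conv hfL hg hK hP⟩, ?_⟩
  calc bmoFNorm F (conv g f)
      ≤ (∫ y, |g y|) * bmoNorm f + (∫ y, |g y|) * sSup (pairRatios F f) :=
        bmoFNorm_le hF.1 (oscBound_conv hfL hg (oscBound_bmoNorm hK))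
          (pairBoundF_conv hfL hg hK (hP.sSup_pairRatios hF.1))
    _ = (∫ y, |g y|) * bmoFNorm F f := by rw [bmoFNorm_eq]; ring
end

section
/- Let F ∈ 𝓕 with ln(1+x) ≲ F(x) for all x ≥ 1. Then L^∞(ℝ²) is strictly contained in BMO_F(ℝ²): every bounded function lies in BMO_F, and there exists an unbounded function in BMO_F, namely x ↦ ln(1 − ln|x|)·1_{|x|≤1}. -/
open MeasureTheory Metric Real Filter

/-- The unbounded model function `x ↦ ln(1 − ln|x|)·1_{|x|≤1}`. -/
noncomputable def logLogFun : Plane → ℝ :=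
  fun x => if ‖x‖ ≤ 1 then Real.log (1 - Real.log ‖x‖) else 0

/-!
Write `logLogFun x = φ ‖x‖` with `φ t = log (1 + max 0 (-log t))`: the profile `φ` is
decreasing and `1`-Lipschitz as a function of `log t`. Hence the average of `φ ‖·‖` over `B(c, r)`
exceeds `φ (‖c‖ + r)` by at most a constant: if `‖c‖ ≥ 2r`, then `‖x‖` varies by a factor at most
`3` on the ball; otherwise the excess is dominated by the integral of `log (3r / ‖x‖)` over
`B(0, 3r)`, which by scaling is a fixed multiple of the volume of `B(c, r)`. This gives the BMO
bound. For `B(c₂, 2r₂) ⊆ B(c₁, r₁)` the averages then differ by at most a constant plus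
`φ r₂ - φ r₁ = log ((1 - log r₂) / (1 - log r₁))`, which `ln (1 + ·) ≲ F` absorbs.
Bounded functions lie in `BMO_F` simply because `F ≥ 1`.
-/

open Set Module

theorem MeasureTheory.LocallyIntegrable.integrableOn_ball_s7 {E F : Type*} [PseudoMetricSpace E]
    [ProperSpace E] [MeasurableSpace E] [OpensMeasurableSpace E] [NormedAddCommGroup F]
    {μ : Measure E} {f : E → F}
    (hf : LocallyIntegrable f μ) (c : E) (r : ℝ) : IntegrableOn f (ball c r) μ :=
  (hf.integrableOn_isCompact (isCompact_closedBall c r)).mono_set ball_subset_closedBall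

section SetAverage
variable {α : Type*} [MeasurableSpace α] {μ : Measure α} {s : Set α} {f g : α → ℝ}

theorem setAverage_mono_ae (hf : IntegrableOn f s μ) (hg : IntegrableOn g s μ)
    (h : ∀ᵐ x ∂μ.restrict s, f x ≤ g x) : ⨍ x in s, f x ∂μ ≤ ⨍ x in s, g x ∂μ := by
  simp only [setAverage_eq, smul_eq_mul]
  exact mul_le_mul_of_nonneg_left (integral_mono_ae hf hg h) (by positivity)

theorem setAverage_le_of_ae_le (h0 : μ s ≠ 0) (hs : μ s ≠ ⊤) (hf : IntegrableOn f s μ) {C : ℝ}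
    (h : ∀ᵐ x ∂μ.restrict s, f x ≤ C) : ⨍ x in s, f x ∂μ ≤ C := by
  simpa [setAverage_const h0 hs] using setAverage_mono_ae hf (integrableOn_const hs) h

theorem le_setAverage_of_ae_le (h0 : μ s ≠ 0) (hs : μ s ≠ ⊤) (hf : IntegrableOn f s μ) {C : ℝ}
    (h : ∀ᵐ x ∂μ.restrict s, C ≤ f x) : C ≤ ⨍ x in s, f x ∂μ := by
  simpa [setAverage_const h0 hs] using setAverage_mono_ae (integrableOn_const hs) hf h

theorem abs_setAverage_le_of_ae_abs_le (h0 : μ s ≠ 0) (hs : μ s ≠ ⊤) (hf : IntegrableOn f s μ)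
    {M : ℝ} (h : ∀ᵐ x ∂μ.restrict s, |f x| ≤ M) : |⨍ x in s, f x ∂μ| ≤ M :=
  abs_le.2 ⟨le_setAverage_of_ae_le h0 hs hf (h.mono fun _ hx => (abs_le.1 hx).1),
    setAverage_le_of_ae_le h0 hs hf (h.mono fun _ hx => (abs_le.1 hx).2)⟩

theorem setAverage_sub_const (h0 : μ s ≠ 0) (hs : μ s ≠ ⊤) (hf : IntegrableOn f s μ) (C : ℝ) :
    ⨍ x in s, (f x - C) ∂μ = ⨍ x in s, f x ∂μ - C := by
  rw [setAverage_eq, setAverage_eq, integral_sub hf (integrableOn_const hs), smul_sub,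
    ← setAverage_eq, ← setAverage_eq, setAverage_const h0 hs]

/-- Pointwise `|f - A| ≤ (f - a) + (A - a)`, since `a` lies below both `f` and `A = ⨍ f`. -/
theorem setAverage_abs_sub_setAverage_le (h0 : μ s ≠ 0) (hs : μ s ≠ ⊤)
    (hf : IntegrableOn f s μ) {a : ℝ} (ha : ∀ᵐ x ∂μ.restrict s, a ≤ f x) :
    ⨍ x in s, |f x - ⨍ y in s, f y ∂μ| ∂μ ≤ 2 * (⨍ x in s, f x ∂μ - a) := by
  set A := ⨍ y in s, f y ∂μ
  have haA : a ≤ A := le_setAverage_of_ae_le h0 hs hf ha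
  calc ⨍ x in s, |f x - A| ∂μ ≤ ⨍ x in s, (f x - (2 * a - A)) ∂μ := by
        refine setAverage_mono_ae (hf.sub (integrableOn_const hs)).abs
          (hf.sub (integrableOn_const hs)) ?_
        filter_upwards [ha] with x hx
        exact abs_le.2 ⟨by linarith, by linarith⟩
    _ = 2 * (A - a) := by rw [setAverage_sub_const h0 hs hf]; ring

end SetAverage

theorem dist_add_le_of_ball_subset_ball {E : Type*} [NormedAddCommGroup E] [NormedSpace ℝ E]
    [Nontrivial E] {x y : E} {r R : ℝ} (hr : 0 < r) (h : ball x r ⊆ ball y R) :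
    dist x y + r ≤ R := by
  have hR : 0 < R := nonempty_ball.1 ⟨x, h (mem_ball_self hr)⟩
  have hcl : closedBall x r ⊆ closedBall y R := by
    simpa only [closure_ball _ hr.ne', closure_ball _ hR.ne'] using closure_mono h
  obtain ⟨w, hw, hray⟩ : ∃ w : E, ‖w‖ = r ∧ SameRay ℝ (x - y) w := by
    by_cases hxy : x = y
    · obtain ⟨w, hw⟩ := exists_norm_eq E hr.le
      exact ⟨w, hw, by simp [hxy]⟩
    · have hd : 0 < ‖x - y‖ := norm_pos_iff.2 (sub_ne_zero.2 hxy)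
      refine ⟨(r / ‖x - y‖) • (x - y), ?_, SameRay.sameRay_nonneg_smul_right _ (by positivity)⟩
      rw [norm_smul, Real.norm_of_nonneg (by positivity), div_mul_cancel₀ _ hd.ne']
  have hmem : x + w ∈ closedBall y R := hcl (by simp [hw])
  rwa [mem_closedBall, dist_eq_norm, add_sub_right_comm, hray.norm_add, hw, ← dist_eq_norm] at hmem

section Radial
variable {E : Type*} [NormedAddCommGroup E] [NormedSpace ℝ E] [FiniteDimensional ℝ E]
  [MeasurableSpace E] [BorelSpace E] (μ : Measure E) [μ.IsAddHaarMeasure]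

theorem locallyIntegrable_log_norm [Nontrivial E] :
    LocallyIntegrable (fun x : E => log ‖x‖) μ := by
  have hball (R : ℝ) : IntegrableOn (fun x : E => log ‖x‖) (ball 0 R) μ := by
    rw [integrableOn_fun_norm_addHaar μ (f := log)]
    simpa only [smul_eq_mul] using
      (intervalIntegral.intervalIntegrable_log' (a := 0) (b := R)).1.mono_set Ioo_subset_Ioc_self
        |>.continuousOn_mul_of_subset (continuous_pow _).continuousOn isCompact_Icc
          measurableSet_Ioo Ioo_subset_Icc_self
  exact fun x => ⟨ball 0 (‖x‖ + 1), isOpen_ball.mem_nhds (by simp), hball _⟩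

theorem setIntegral_log_div_norm_ball {s : ℝ} (hs : 0 < s) :
    ∫ x in ball (0 : E) s, log (s / ‖x‖) ∂μ =
      s ^ finrank ℝ E * ∫ x in ball (0 : E) 1, -log ‖x‖ ∂μ := by
  have hscale :=
    Measure.setIntegral_comp_smul_of_pos μ (fun x => log (s / ‖x‖)) (ball (0 : E) 1) hs
  simp only [smul_unitBall_of_pos hs, norm_smul, Real.norm_of_nonneg hs.le,
    div_mul_cancel_left₀ hs.ne', log_inv] at hscale
  rw [hscale, smul_eq_mul, mul_inv_cancel_left₀ (by positivity)]

end Radial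

section RadialProfile
variable {E : Type*} [NormedAddCommGroup E] [NormedSpace ℝ E] [FiniteDimensional ℝ E]
  [MeasurableSpace E] [BorelSpace E] [Nontrivial E] (μ : Measure E) [μ.IsAddHaarMeasure]
  {φ : ℝ → ℝ}

theorem measureReal_ball_eq (c : E) {r : ℝ} (hr : 0 ≤ r) :
    μ.real (ball c r) = r ^ finrank ℝ E * μ.real (ball 0 1) := by
  rw [measureReal_def, Measure.addHaar_ball μ c hr, ENNReal.toReal_mul,
    ENNReal.toReal_ofReal (by positivity), measureReal_def]

theorem ae_restrict_ball_le_comp_norm (hφ : AntitoneOn φ (Ioi 0)) (c : E) (r : ℝ) :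
    ∀ᵐ x ∂μ.restrict (ball c r), φ (‖c‖ + r) ≤ φ ‖x‖ := by
  filter_upwards [ae_restrict_mem measurableSet_ball, ae_restrict_of_ae (μ.ae_ne 0)]
    with x hx hx0
  exact hφ (norm_pos_iff.2 hx0) ((norm_pos_iff.2 hx0).trans (norm_lt_of_mem_ball hx))
    (norm_lt_of_mem_ball hx).le

theorem le_setAverage_comp_norm (hφ : AntitoneOn φ (Ioi 0)) {c : E} {r : ℝ} (hr : 0 < r)
    (hi : IntegrableOn (fun x => φ ‖x‖) (ball c r) μ) :
    φ (‖c‖ + r) ≤ ⨍ x in ball c r, φ ‖x‖ ∂μ :=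
  le_setAverage_of_ae_le (measure_ball_pos μ c hr).ne' measure_ball_lt_top.ne hi
    (ae_restrict_ball_le_comp_norm μ hφ c r)

theorem setIntegral_comp_norm_sub_le (hφ : AntitoneOn φ (Ioi 0))
    (hφlog : ∀ ⦃y s⦄, 0 < y → y ≤ s → φ y - φ s ≤ log (s / y))
    {c : E} {r : ℝ} (hr : 0 < r) (hc : ‖c‖ ≤ 2 * r)
    (hi : IntegrableOn (fun x => φ ‖x‖) (ball c r) μ) :
    ∫ x in ball c r, (φ ‖x‖ - φ (‖c‖ + r)) ∂μ ≤
      (3 * r) ^ finrank ℝ E * ∫ x in ball (0 : E) 1, -log ‖x‖ ∂μ := by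
  set s := 3 * r with hs
  have hs0 : 0 < s := by positivity
  have hsub : ball c r ⊆ ball 0 s := fun x hx =>
    mem_ball_zero_iff.2 (by linarith [norm_lt_of_mem_ball hx])
  have hlogi : IntegrableOn (fun x : E => log (s / ‖x‖)) (ball 0 s) μ := by
    refine (IntegrableOn.sub (integrableOn_const (C := log s))
      ((locallyIntegrable_log_norm μ).integrableOn_ball_s7 0 s)).congr_fun_ae ?_
    filter_upwards [ae_restrict_of_ae (μ.ae_ne 0)] with x hx
    rw [log_div hs0.ne' (norm_ne_zero_iff.2 hx), Pi.sub_apply]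
  calc ∫ x in ball c r, (φ ‖x‖ - φ (‖c‖ + r)) ∂μ ≤ ∫ x in ball c r, log (s / ‖x‖) ∂μ := by
        refine setIntegral_mono_ae_restrict (hi.sub integrableOn_const) (hlogi.mono_set hsub) ?_
        filter_upwards [ae_restrict_mem measurableSet_ball, ae_restrict_of_ae (μ.ae_ne 0)]
          with x hx hx0
        have hx' : ‖x‖ < ‖c‖ + r := norm_lt_of_mem_ball hx
        have := hφ (show 0 < ‖c‖ + r by positivity) hs0 (by linarith : ‖c‖ + r ≤ s)
        linarith [hφlog (norm_pos_iff.2 hx0) (by linarith : ‖x‖ ≤ s)]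
    _ ≤ ∫ x in ball 0 s, log (s / ‖x‖) ∂μ := by
        refine setIntegral_mono_set hlogi ?_ hsub.eventuallyLE
        filter_upwards [ae_restrict_mem measurableSet_ball, ae_restrict_of_ae (μ.ae_ne 0)]
          with x hx hx0
        exact log_nonneg ((one_le_div₀ (norm_pos_iff.2 hx0)).2 (mem_ball_zero_iff.1 hx).le)
    _ = _ := setIntegral_log_div_norm_ball μ hs0

theorem exists_setAverage_comp_norm_le (hφ : AntitoneOn φ (Ioi 0))
    (hφlog : ∀ ⦃y s⦄, 0 < y → y ≤ s → φ y - φ s ≤ log (s / y))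
    (hi : LocallyIntegrable (fun x => φ ‖x‖) μ) :
    ∃ κ, 0 ≤ κ ∧ ∀ (c : E) (r : ℝ), 0 < r → ⨍ x in ball c r, φ ‖x‖ ∂μ ≤ φ (‖c‖ + r) + κ := by
  set K := ∫ x in ball (0 : E) 1, -log ‖x‖ ∂μ
  refine ⟨max (log 3) (3 ^ finrank ℝ E * K / μ.real (ball 0 1)),
    (log_nonneg (by norm_num)).trans (le_max_left _ _), fun c r hr => ?_⟩
  have h0 := (measure_ball_pos μ c hr).ne'
  have hfin := (measure_ball_lt_top (μ := μ) (x := c) (r := r)).ne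
  have hic := hi.integrableOn_ball_s7 c r
  rw [← sub_le_iff_le_add', ← setAverage_sub_const h0 hfin hic]
  rcases le_or_gt ‖c‖ (2 * r) with hc | hc
  · refine le_max_of_le_right ?_
    have hV : 0 < μ.real (ball (0 : E) 1) :=
      ENNReal.toReal_pos (measure_ball_pos μ 0 one_pos).ne' measure_ball_lt_top.ne
    rw [setAverage_eq, smul_eq_mul, measureReal_ball_eq μ c hr.le]
    calc (r ^ finrank ℝ E * μ.real (ball 0 1))⁻¹ * ∫ x in ball c r, (φ ‖x‖ - φ (‖c‖ + r)) ∂μ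
        ≤ (r ^ finrank ℝ E * μ.real (ball 0 1))⁻¹ * ((3 * r) ^ finrank ℝ E * K) := by
          gcongr
          exact setIntegral_comp_norm_sub_le μ hφ hφlog hr hc hic
      _ = 3 ^ finrank ℝ E * K / μ.real (ball 0 1) := by
          field_simp
          ring
  · refine le_max_of_le_left (setAverage_le_of_ae_le h0 hfin (hic.sub integrableOn_const) ?_)
    filter_upwards [ae_restrict_mem measurableSet_ball] with x hx
    have hcx : ‖c‖ < ‖x‖ + r := norm_lt_of_mem_ball (mem_ball_comm.1 hx)
    calc φ ‖x‖ - φ (‖c‖ + r) ≤ log ((‖c‖ + r) / ‖x‖) :=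
          hφlog (by linarith) (by linarith [norm_lt_of_mem_ball hx])
      _ ≤ log 3 := log_le_log (by apply div_pos <;> linarith)
          ((div_le_iff₀ (by linarith)).2 (by linarith))

end RadialProfile

theorem sub_le_log_three_add_sub {φ : ℝ → ℝ} (hφ : AntitoneOn φ (Ioi 0))
    (hφlog : ∀ ⦃y s⦄, 0 < y → y ≤ s → φ y - φ s ≤ log (s / y))
    {r₁ r₂ ρ₁ ρ₂ : ℝ} (hr₂ : 0 < r₂) (hr : r₂ ≤ r₁) (hρ₂ : r₂ ≤ ρ₂) (hρ₁ : r₁ ≤ ρ₁)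
    (hρ : ρ₂ ≤ ρ₁) (hgap : ρ₁ ≤ ρ₂ + 2 * r₁) :
    φ ρ₂ - φ ρ₁ ≤ log 3 + (φ r₂ - φ r₁) := by
  have hr₁ : 0 < r₁ := hr₂.trans_le hr
  have hlog3 {a b : ℝ} (ha : 0 < a) (hab : a ≤ b) (hb : b ≤ 3 * a) : φ a - φ b ≤ log 3 :=
    (hφlog ha hab).trans
      (log_le_log (div_pos (ha.trans_le hab) ha) ((div_le_iff₀ ha).2 (by linarith)))
  rcases le_or_gt ρ₁ (3 * ρ₂) with h | h
  · linarith [hφ hr₂ hr₁ hr, hlog3 (hr₂.trans_le hρ₂) hρ h]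
  · linarith [hφ hr₂ (hr₂.trans_le hρ₂) hρ₂, hlog3 hr₁ hρ₁ (by linarith)]

noncomputable def logLogProfile (t : ℝ) : ℝ := log (1 + max 0 (-log t))

theorem logLogFun_eq : logLogFun = fun x => logLogProfile ‖x‖ := by
  ext x
  unfold logLogFun logLogProfile
  split_ifs with h
  · rw [max_eq_right (neg_nonneg.2 (log_nonpos (norm_nonneg x) h)), sub_eq_add_neg]
  · rw [max_eq_left (neg_nonpos.2 (log_nonneg (not_le.1 h).le)), add_zero, log_one]

theorem logLogProfile_of_le_one {t : ℝ} (h₀ : 0 ≤ t) (h₁ : t ≤ 1) :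
    logLogProfile t = log (1 - log t) := by
  rw [logLogProfile, max_eq_right (neg_nonneg.2 (log_nonpos h₀ h₁)), sub_eq_add_neg]

theorem logLogProfile_exp_one_sub_exp {m : ℝ} (hm : 0 ≤ m) :
    logLogProfile (exp (1 - exp m)) = m := by
  rw [logLogProfile_of_le_one (exp_pos _).le (exp_le_one_iff.2 (by linarith [one_le_exp hm])),
    log_exp, sub_sub_cancel, log_exp]

theorem measurable_logLogProfile : Measurable logLogProfile := by
  unfold logLogProfile; fun_prop

theorem abs_logLogProfile_le (t : ℝ) : |logLogProfile t| ≤ |log t| := by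
  have hmax : 0 ≤ max 0 (-log t) := le_max_left _ _
  rw [abs_of_nonneg (show 0 ≤ logLogProfile t from log_nonneg (by linarith))]
  calc logLogProfile t ≤ 1 + max 0 (-log t) - 1 := log_le_sub_one_of_pos (by linarith)
    _ ≤ |log t| := by rw [add_sub_cancel_left]; exact max_le (abs_nonneg _) (neg_le_abs _)

theorem antitoneOn_logLogProfile : AntitoneOn logLogProfile (Ioi 0) := fun y hy s _ hys =>
  log_le_log (by positivity) (by gcongr)

theorem logLogProfile_sub_le {y s : ℝ} (hy : 0 < y) (hys : y ≤ s) :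
    logLogProfile y - logLogProfile s ≤ log (s / y) := by
  set L := log (s / y)
  have hL : 0 ≤ L := log_nonneg ((one_le_div₀ hy).2 hys)
  have hb : 0 ≤ max 0 (-log s) := le_max_left _ _
  have hab : max 0 (-log y) ≤ max 0 (-log s) + L := by
    have hL' : L = log s - log y := log_div (hy.trans_le hys).ne' hy.ne'
    exact max_le (by linarith) (by linarith [le_max_right 0 (-log s)])
  have hexp : 1 + max 0 (-log y) ≤ (1 + max 0 (-log s)) * exp L := by
    nlinarith [add_one_le_exp L]
  have := log_le_log (by positivity) hexp
  rw [log_mul (by positivity) (exp_pos L).ne', log_exp] at this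
  unfold logLogProfile
  linarith

theorem one_le_one_sub_log_div {r₁ r₂ : ℝ} (hr₂ : 0 < r₂) (h : r₂ ≤ r₁) (h₁ : r₁ ≤ 1) :
    1 ≤ (1 - log r₂) / (1 - log r₁) := by
  have := log_nonpos (hr₂.trans_le h).le h₁
  rw [one_le_div₀ (by linarith)]
  linarith [log_le_log hr₂ h]

theorem OscBound.mono {f : Plane → ℝ} {K K' : ℝ} (h : OscBound f K) (hK : K ≤ K') :
    OscBound f K' :=
  fun c r hr => (h c r hr).trans hK

theorem PairBoundF.mono {F : ℝ → ℝ} (hF : ∀ x, 1 ≤ x → 0 ≤ F x) {f : Plane → ℝ} {K K' : ℝ}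
    (h : PairBoundF F f K) (hK : K ≤ K') : PairBoundF F f K' := by
  intro c₁ r₁ c₂ r₂ hr₂ hr₁ h₁ hsub
  have hd := dist_add_le_of_ball_subset_ball (by positivity) hsub
  exact (h c₁ r₁ c₂ r₂ hr₂ hr₁ h₁ hsub).trans <| mul_le_mul_of_nonneg_right hK <|
    hF _ (one_le_one_sub_log_div hr₂ (by linarith [dist_nonneg (x := c₂) (y := c₁)]) h₁)

theorem memBMOF_of_abs_le {F : ℝ → ℝ} (hF : ∀ x, 1 ≤ x → 1 ≤ F x) {f : Plane → ℝ}
    (hf : Measurable f) {M : ℝ} (hM : ∀ x, |f x| ≤ M) : MemBMOF F f := by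
  have hi : LocallyIntegrable f volume :=
    (locallyIntegrable_const M).mono hf.aestronglyMeasurable
      (ae_of_all _ fun x => by simpa only [Real.norm_eq_abs] using (hM x).trans (le_abs_self M))
  have havg (c : Plane) {r : ℝ} (hr : 0 < r) : |ballAvg f c r| ≤ M :=
    abs_setAverage_le_of_ae_abs_le (measure_ball_pos volume c hr).ne' measure_ball_lt_top.ne
      (hi.integrableOn_ball_s7 c r) (ae_of_all _ hM)
  refine ⟨hi, 2 * M, fun c r hr => ?_, fun c₁ r₁ c₂ r₂ hr₂ hr₁ h₁ hsub => ?_⟩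
  · refine setAverage_le_of_ae_le (measure_ball_pos volume c hr).ne' measure_ball_lt_top.ne
      ((hi.integrableOn_ball_s7 c r).sub integrableOn_const).abs (ae_of_all _ fun y => ?_)
    show |f y - ballAvg f c r| ≤ 2 * M
    linarith [abs_sub (f y) (ballAvg f c r), hM y, havg c hr]
  · have hd := dist_add_le_of_ball_subset_ball (by positivity) hsub
    have hF1 := hF _ (one_le_one_sub_log_div hr₂ (by linarith [dist_nonneg (x := c₂) (y := c₁)]) h₁)
    have hM0 : 0 ≤ M := (abs_nonneg _).trans (hM 0)
    nlinarith [abs_sub (ballAvg f c₂ r₂) (ballAvg f c₁ r₁), havg c₂ hr₂, havg c₁ hr₁]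

theorem locallyIntegrable_logLogFun : LocallyIntegrable logLogFun volume := by
  rw [logLogFun_eq]
  exact (locallyIntegrable_log_norm volume).mono
    (measurable_logLogProfile.comp measurable_norm).aestronglyMeasurable
    (ae_of_all _ fun x => abs_logLogProfile_le ‖x‖)

theorem exists_ballAvg_logLogFun_le : ∃ κ, 0 ≤ κ ∧
    ∀ (c : Plane) (r : ℝ), 0 < r → ballAvg logLogFun c r ≤ logLogProfile (‖c‖ + r) + κ := by
  have hi := locallyIntegrable_logLogFun
  rw [logLogFun_eq] at hi ⊢
  exact exists_setAverage_comp_norm_le volume antitoneOn_logLogProfile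
    (fun _ _ => logLogProfile_sub_le) hi

theorem logLogProfile_le_ballAvg (c : Plane) {r : ℝ} (hr : 0 < r) :
    logLogProfile (‖c‖ + r) ≤ ballAvg logLogFun c r := by
  have hi := locallyIntegrable_logLogFun.integrableOn_ball_s7 c r
  rw [logLogFun_eq] at hi ⊢
  exact le_setAverage_comp_norm volume antitoneOn_logLogProfile hr hi

theorem oscBound_logLogFun {κ : ℝ} (hκ : ∀ (c : Plane) (r : ℝ), 0 < r →
    ballAvg logLogFun c r ≤ logLogProfile (‖c‖ + r) + κ) : OscBound logLogFun (2 * κ) := by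
  intro c r hr
  have hle : ∀ᵐ x ∂volume.restrict (ball c r), logLogProfile (‖c‖ + r) ≤ logLogFun x := by
    simpa only [logLogFun_eq] using
      ae_restrict_ball_le_comp_norm volume antitoneOn_logLogProfile c r
  have := setAverage_abs_sub_setAverage_le (measure_ball_pos volume c hr).ne'
    measure_ball_lt_top.ne (locallyIntegrable_logLogFun.integrableOn_ball_s7 c r) hle
  have hκcr := hκ c r hr
  rw [ballAvg] at hκcr
  exact this.trans (by linarith)

theorem pairBoundF_logLogFun {F : ℝ → ℝ} (hF : ∀ x, 1 ≤ x → 1 ≤ F x) {C : ℝ}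
    (hC : ∀ x, 1 ≤ x → log (1 + x) ≤ C * F x) {κ : ℝ} (hκ : ∀ (c : Plane) (r : ℝ), 0 < r →
      ballAvg logLogFun c r ≤ logLogProfile (‖c‖ + r) + κ) :
    PairBoundF F logLogFun (κ + log 3 + C) := by
  intro c₁ r₁ c₂ r₂ hr₂ hr₁ h₁ hsub
  have hd := dist_add_le_of_ball_subset_ball (by positivity) hsub
  have hr : r₂ ≤ r₁ := by linarith [dist_nonneg (x := c₂) (y := c₁)]
  have hρ : ‖c₂‖ + r₂ ≤ ‖c₁‖ + r₁ := by
    linarith [norm_le_norm_add_const_of_dist_le (le_refl (dist c₂ c₁))]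
  have hgap : ‖c₁‖ + r₁ ≤ ‖c₂‖ + r₂ + 2 * r₁ := by
    linarith [norm_le_norm_add_const_of_dist_le (le_refl (dist c₁ c₂)), dist_comm c₁ c₂]
  have hφ := sub_le_log_three_add_sub antitoneOn_logLogProfile
    (fun _ _ => logLogProfile_sub_le) hr₂ hr (by linarith [norm_nonneg c₂])
    (by linarith [norm_nonneg c₁]) hρ hgap
  have hlog₁ := log_nonpos hr₁.le h₁
  rw [logLogProfile_of_le_one hr₂.le (by linarith), logLogProfile_of_le_one hr₁.le h₁,
    ← log_div (by linarith [log_le_log hr₂ hr]) (by linarith)] at hφ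
  set q := (1 - log r₂) / (1 - log r₁)
  have hq : 1 ≤ q := one_le_one_sub_log_div hr₂ hr h₁
  have hlogq : log q ≤ C * F q := (log_le_log (by linarith) (by linarith)).trans (hC q hq)
  have hanti := antitoneOn_logLogProfile (show 0 < ‖c₂‖ + r₂ by positivity)
    (show 0 < ‖c₁‖ + r₁ by positivity) hρ
  have hA₁ := logLogProfile_le_ballAvg c₁ hr₁
  have hA₂ := logLogProfile_le_ballAvg c₂ hr₂
  have hB₁ := hκ c₁ r₁ hr₁
  have hB₂ := hκ c₂ r₂ hr₂
  have hlog3 : 0 ≤ log 3 := log_nonneg (by norm_num)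
  have hFq := hF q hq
  have hlogq0 : 0 ≤ log q := log_nonneg hq
  calc |ballAvg logLogFun c₂ r₂ - ballAvg logLogFun c₁ r₁| ≤ κ + log 3 + log q :=
        abs_le.2 ⟨by linarith, by linarith⟩
    _ ≤ (κ + log 3 + C) * F q := by nlinarith

theorem memBMOF_logLogFun {F : ℝ → ℝ} (hF : ∀ x, 1 ≤ x → 1 ≤ F x) {C : ℝ} (hC₀ : 0 < C)
    (hC : ∀ x, 1 ≤ x → log (1 + x) ≤ C * F x) : MemBMOF F logLogFun := by
  obtain ⟨κ, hκ₀, hκ⟩ := exists_ballAvg_logLogFun_le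
  have hlog3 : 0 ≤ log 3 := log_nonneg (by norm_num)
  exact ⟨locallyIntegrable_logLogFun, 2 * κ + log 3 + C,
    (oscBound_logLogFun hκ).mono (by linarith),
    (pairBoundF_logLogFun hF hC hκ).mono (fun x hx => zero_le_one.trans (hF x hx)) (by linarith)⟩

theorem not_exists_abs_logLogFun_le : ¬ ∃ M : ℝ, ∀ x, |logLogFun x| ≤ M := by
  rintro ⟨M, hM⟩
  obtain ⟨x, hx⟩ := exists_norm_eq Plane (exp_pos (1 - exp (|M| + 1))).le
  have hval : logLogFun x = |M| + 1 := by
    simp only [logLogFun_eq, hx, logLogProfile_exp_one_sub_exp (by positivity : 0 ≤ |M| + 1)]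
  linarith [hM x, le_abs_self (logLogFun x), le_abs_self M]

/-- If `F ∈ 𝓕` dominates `ln(1+·)`, then `L^∞(ℝ²)` is strictly contained in
`BMO_F(ℝ²)`: every bounded (measurable) function lies in `BMO_F`, and the unbounded function
`x ↦ ln(1 − ln|x|)·1_{|x|≤1}` also lies in `BMO_F`. -/
theorem linfty_strictly_contained_bmoF (F : ℝ → ℝ) (hF : ClassF F)
    (hlog : ∃ c : ℝ, 0 < c ∧ ∀ x, 1 ≤ x → Real.log (1 + x) ≤ c * F x) :
    (∀ f : Plane → ℝ, Measurable f → (∃ M : ℝ, ∀ x, |f x| ≤ M) → MemBMOF F f) ∧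
    MemBMOF F logLogFun ∧ ¬ ∃ M : ℝ, ∀ x, |logLogFun x| ≤ M := by
  obtain ⟨c, hc₀, hc⟩ := hlog
  exact ⟨fun f hf ⟨M, hM⟩ => memBMOF_of_abs_le hF.1 hf hM, memBMOF_logLogFun hF.1 hc₀ hc,
    not_exists_abs_logLogFun_le⟩
end

section
/- (Osgood lemma) Let a, C > 0, γ : [t₀,T] → ℝ₊ locally integrable, μ : [a,∞) → ℝ₊ continuous nondecreasing, and ρ : [t₀,T] → [a,∞) measurable satisfying ρ(t) ≤ C + ∫_{t₀}^t γ(s)μ(ρ(s))ds for all t. Define 𝓜(y) = ∫_a^y dx/μ(x) and assume 𝓜(y) → ∞ as y → ∞. Then for all t ∈ [t₀,T], ρ(t) ≤ 𝓜⁻¹(𝓜(C) + ∫_{t₀}^t γ(s)ds). -/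
open MeasureTheory Metric Real Filter

/-- **Osgood lemma.** If `ρ(t) ≤ C + ∫_{t₀}^t γ(s) μ(ρ(s)) ds` with `μ`
continuous, nondecreasing and positive on `[a,∞)`, `γ ≥ 0` integrable, and
`𝓜(y) = ∫_a^y dx/μ(x) → ∞`, then `𝓜(ρ(t)) ≤ 𝓜(C) + ∫_{t₀}^t γ(s) ds` for all `t`,
i.e. `ρ(t) ≤ 𝓜⁻¹(𝓜(C) + ∫_{t₀}^t γ(s) ds)`. -/
theorem osgood_lemma (a C t₀ T : ℝ) (ha : 0 < a) (hC : 0 < C) (haC : a ≤ C)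
    (γ : ℝ → ℝ) (hγ : ∀ s ∈ Set.Icc t₀ T, 0 ≤ γ s)
    (hγint : MeasureTheory.IntegrableOn γ (Set.Icc t₀ T) volume)
    (μ : ℝ → ℝ) (hμc : ContinuousOn μ (Set.Ici a)) (hμm : MonotoneOn μ (Set.Ici a))
    (hμpos : ∀ x ∈ Set.Ici a, 0 < μ x)
    (hM : Tendsto (fun y => ∫ x in a..y, 1 / μ x) atTop atTop)
    (ρ : ℝ → ℝ) (hρmeas : Measurable ρ) (hρa : ∀ t ∈ Set.Icc t₀ T, a ≤ ρ t)
    (hint : MeasureTheory.IntegrableOn (fun s => γ s * μ (ρ s)) (Set.Icc t₀ T) volume)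
    (hρ : ∀ t ∈ Set.Icc t₀ T, ρ t ≤ C + ∫ s in t₀..t, γ s * μ (ρ s)) :
    ∀ t ∈ Set.Icc t₀ T,
      (∫ x in a..ρ t, 1 / μ x) ≤ (∫ x in a..C, 1 / μ x) + ∫ s in t₀..t, γ s := by
  intro t ht
  obtain ⟨ht₀, htT⟩ := ht
  have ht₀T : t₀ ≤ T := ht₀.trans htT
  have hμa : 0 < μ a := hμpos a Set.self_mem_Ici
  -- integrand 1/μ
  have hinv_cont : ContinuousOn (fun x => 1 / μ x) (Set.Ici a) :=
    continuousOn_const.div hμc (fun x hx => (hμpos x hx).ne')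
  have hinv_ii : ∀ u v : ℝ, a ≤ u → a ≤ v →
      IntervalIntegrable (fun x => 1 / μ x) volume u v := by
    intro u v hu hv
    apply (hinv_cont.mono ?_).intervalIntegrable
    intro x hx
    exact le_trans (le_inf hu hv) hx.1
  set M : ℝ → ℝ := fun y => ∫ x in a..y, 1 / μ x with hMdef
  have hMseg : ∀ u v : ℝ, a ≤ v → v ≤ u → M u - M v = ∫ x in v..u, 1 / μ x := by
    intro u v hav hvu
    have h := intervalIntegral.integral_add_adjacent_intervals
      (hinv_ii a v le_rfl hav) (hinv_ii v u hav (hav.trans hvu))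
    simp only [hMdef]
    linarith [h]
  have hMdiffle : ∀ u v : ℝ, a ≤ v → v ≤ u → M u - M v ≤ (u - v) / μ v := by
    intro u v hav hvu
    rw [hMseg u v hav hvu]
    have hμv : 0 < μ v := hμpos v hav
    calc (∫ x in v..u, 1 / μ x) ≤ ∫ x in v..u, 1 / μ v := by
          apply intervalIntegral.integral_mono_on hvu
            (hinv_ii v u hav (hav.trans hvu)) intervalIntegrable_const
          intro x hx
          exact one_div_le_one_div_of_le hμv
            (hμm hav (hav.trans hx.1) hx.1)
      _ = (u - v) / μ v := by
          rw [intervalIntegral.integral_const, smul_eq_mul]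
          ring
  have hMmono : ∀ u v : ℝ, a ≤ v → v ≤ u → M v ≤ M u := by
    intro u v hav hvu
    have h := hMseg u v hav hvu
    have hnn : 0 ≤ ∫ x in v..u, 1 / μ x := by
      apply intervalIntegral.integral_nonneg hvu
      intro x hx
      have := hμpos x (hav.trans hx.1)
      positivity
    linarith
  have hMlip : ∀ u v : ℝ, a ≤ u → a ≤ v → |M u - M v| ≤ (1 / μ a) * |u - v| := by
    have key : ∀ u v : ℝ, a ≤ v → v ≤ u → M u - M v ≤ (1 / μ a) * (u - v) := by
      intro u v hav hvu
      have h1 := hMdiffle u v hav hvu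
      have hμv : 0 < μ v := hμpos v hav
      have hμva : μ a ≤ μ v := hμm (Set.self_mem_Ici) hav hav
      have h2 : (u - v) / μ v ≤ (u - v) / μ a := by
        apply div_le_div_of_nonneg_left (by linarith) hμa  -- may need arg order fix
        exact hμva
      calc M u - M v ≤ (u - v) / μ v := h1
        _ ≤ (u - v) / μ a := h2
        _ = (1 / μ a) * (u - v) := by ring
    intro u v hu hv
    rcases le_total v u with h | h
    · have h1 := key u v hv h
      have h2 : 0 ≤ M u - M v := by linarith [hMmono u v hv h]
      rw [abs_of_nonneg h2, abs_of_nonneg (by linarith : (0:ℝ) ≤ u - v)]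
      exact h1
    · have h1 := key v u hu h
      have h2 : 0 ≤ M v - M u := by linarith [hMmono v u hu h]
      rw [abs_sub_comm, abs_of_nonneg h2, abs_sub_comm u v,
        abs_of_nonneg (by linarith : (0:ℝ) ≤ v - u)]
      exact h1
  have hMcont : ContinuousOn M (Set.Ici a) := by
    apply LipschitzOnWith.continuousOn (K := Real.toNNReal (1 / μ a))
    rw [lipschitzOnWith_iff_dist_le_mul]
    intro x hx y hy
    rw [Real.dist_eq, Real.dist_eq, Real.coe_toNNReal _ (by positivity)]
    exact hMlip x y hx hy
  -- γ and f integrability on subintervals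
  have hγii : ∀ s u : ℝ, t₀ ≤ s → s ≤ u → u ≤ T → IntervalIntegrable γ volume s u := by
    intro s u hs hsu hu
    exact (intervalIntegrable_iff_integrableOn_Icc_of_le hsu).mpr
      (hγint.mono_set (Set.Icc_subset_Icc hs hu))
  have hfii : ∀ s u : ℝ, t₀ ≤ s → s ≤ u → u ≤ T →
      IntervalIntegrable (fun s => γ s * μ (ρ s)) volume s u := by
    intro s u hs hsu hu
    exact (intervalIntegrable_iff_integrableOn_Icc_of_le hsu).mpr
      (hint.mono_set (Set.Icc_subset_Icc hs hu))
  set G : ℝ → ℝ := fun u => ∫ s in t₀..u, γ s with hGdef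
  set R : ℝ → ℝ := fun u => C + ∫ s in t₀..u, γ s * μ (ρ s) with hRdef
  have hGseg : ∀ s u : ℝ, t₀ ≤ s → s ≤ u → u ≤ T → G u - G s = ∫ x in s..u, γ x := by
    intro s u hs hsu hu
    have h := intervalIntegral.integral_add_adjacent_intervals
      (hγii t₀ s le_rfl hs (hsu.trans hu)) (hγii s u hs hsu hu)
    simp only [hGdef]
    linarith
  have hRseg : ∀ s u : ℝ, t₀ ≤ s → s ≤ u → u ≤ T →
      R u - R s = ∫ x in s..u, γ x * μ (ρ x) := by
    intro s u hs hsu hu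
    have h := intervalIntegral.integral_add_adjacent_intervals
      (hfii t₀ s le_rfl hs (hsu.trans hu)) (hfii s u hs hsu hu)
    simp only [hRdef]
    linarith
  have hfnn : ∀ x ∈ Set.Icc t₀ T, 0 ≤ γ x * μ (ρ x) := by
    intro x hx
    exact mul_nonneg (hγ x hx) (hμpos _ (hρa x hx)).le
  have hGmono : ∀ s u : ℝ, t₀ ≤ s → s ≤ u → u ≤ T → G s ≤ G u := by
    intro s u hs hsu hu
    have h := hGseg s u hs hsu hu
    have hnn : 0 ≤ ∫ x in s..u, γ x := by
      apply intervalIntegral.integral_nonneg hsu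
      intro x hx
      exact hγ x ⟨hs.trans hx.1, hx.2.trans hu⟩
    linarith
  have hRmono : ∀ s u : ℝ, t₀ ≤ s → s ≤ u → u ≤ T → R s ≤ R u := by
    intro s u hs hsu hu
    have h := hRseg s u hs hsu hu
    have hnn : 0 ≤ ∫ x in s..u, γ x * μ (ρ x) := by
      apply intervalIntegral.integral_nonneg hsu
      intro x hx
      exact hfnn x ⟨hs.trans hx.1, hx.2.trans hu⟩
    linarith
  have hRt₀ : R t₀ = C := by simp [hRdef]
  have hGt₀ : G t₀ = 0 := by simp [hGdef]
  have hRC : ∀ u ∈ Set.Icc t₀ T, C ≤ R u := by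
    intro u hu
    have := hRmono t₀ u le_rfl hu.1 hu.2
    rwa [hRt₀] at this
  have hRge : ∀ u ∈ Set.Icc t₀ T, a ≤ R u := fun u hu => haC.trans (hRC u hu)
  have hRcont : ContinuousOn R (Set.Icc t₀ T) := by
    apply continuousOn_const.add
    have h := intervalIntegral.continuousOn_primitive_interval
      (f := fun s => γ s * μ (ρ s)) (a := t₀) (b := T) (μ := volume) ?_
    · rwa [Set.uIcc_of_le ht₀T] at h
    · rwa [Set.uIcc_of_le ht₀T]
  have hGcont : ContinuousOn G (Set.Icc t₀ T) := by
    have h := intervalIntegral.continuousOn_primitive_interval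
      (f := γ) (a := t₀) (b := T) (μ := volume) ?_
    · rwa [Set.uIcc_of_le ht₀T] at h
    · rwa [Set.uIcc_of_le ht₀T]
  -- step inequality
  have step : ∀ s u : ℝ, t₀ ≤ s → s ≤ u → u ≤ T →
      M (R u) ≤ M (R s) + (μ (R u) / μ (R s)) * (G u - G s) := by
    intro s u hs hsu hu
    have hsmem : s ∈ Set.Icc t₀ T := ⟨hs, hsu.trans hu⟩
    have humem : u ∈ Set.Icc t₀ T := ⟨hs.trans hsu, hu⟩
    have hRs : a ≤ R s := hRge s hsmem
    have hRu : a ≤ R u := hRge u humem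
    have hRsu : R s ≤ R u := hRmono s u hs hsu hu
    have hμRs : 0 < μ (R s) := hμpos _ hRs
    have h1 : M (R u) - M (R s) ≤ (R u - R s) / μ (R s) := hMdiffle _ _ hRs hRsu
    have h2 := hRseg s u hs hsu hu
    have h3 : (∫ x in s..u, γ x * μ (ρ x)) ≤ ∫ x in s..u, γ x * μ (R u) := by
      apply intervalIntegral.integral_mono_on hsu (hfii s u hs hsu hu)
        ((hγii s u hs hsu hu).mul_const _)
      intro x hx
      have hxmem : x ∈ Set.Icc t₀ T := ⟨hs.trans hx.1, hx.2.trans hu⟩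
      have hρx : ρ x ≤ R u := le_trans (hρ x hxmem) (hRmono x u hxmem.1 hx.2 hu)
      exact mul_le_mul_of_nonneg_left (hμm (hρa x hxmem) hRu hρx) (hγ x hxmem)
    have h4 : (∫ x in s..u, γ x * μ (R u)) = (G u - G s) * μ (R u) := by
      rw [intervalIntegral.integral_mul_const, hGseg s u hs hsu hu]
    have h5 : R u - R s ≤ (G u - G s) * μ (R u) := by rw [h2]; linarith
    have h6 : (R u - R s) / μ (R s) ≤ ((G u - G s) * μ (R u)) / μ (R s) := by
      apply div_le_div_of_nonneg_right h5 hμRs.le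
    have : ((G u - G s) * μ (R u)) / μ (R s) = (μ (R u) / μ (R s)) * (G u - G s) := by
      ring
    linarith [this ▸ h6]
  -- epsilon claim
  have hGt : 0 ≤ G t := by
    have := hGmono t₀ t le_rfl ht₀ htT
    rwa [hGt₀] at this
  have key : ∀ ε : ℝ, 0 < ε → M (R t) ≤ M C + (1 + ε) * G t := by
    intro ε hε
    set S : Set ℝ := Set.Icc t₀ t ∩ {s | M (R s) - (1 + ε) * G s ≤ M C} with hSdef
    have hIccsub : Set.Icc t₀ t ⊆ Set.Icc t₀ T := Set.Icc_subset_Icc le_rfl htT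
    have hcontS : ContinuousOn (fun s => M (R s) - (1 + ε) * G s) (Set.Icc t₀ t) := by
      apply ContinuousOn.sub
      · exact (hMcont.comp (hRcont.mono hIccsub)
          (fun u hu => hRge u (hIccsub hu)))
      · exact continuousOn_const.mul (hGcont.mono hIccsub)
    have hSclosed : IsClosed S :=
      hcontS.preimage_isClosed_of_isClosed isClosed_Icc isClosed_Iic
    have ht₀S : t₀ ∈ S := by
      constructor
      · exact ⟨le_rfl, ht₀⟩
      · simp only [Set.mem_setOf_eq, hRt₀, hGt₀]
        linarith
    have hScompact : IsCompact S :=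
      (isCompact_Icc (a := t₀) (b := t)).of_isClosed_subset hSclosed Set.inter_subset_left
    set c := sSup S with hcdef
    have hcS : c ∈ S := hScompact.sSup_mem ⟨t₀, ht₀S⟩
    have hct : c ≤ t := hcS.1.2
    have hct₀ : t₀ ≤ c := hcS.1.1
    have hcmemT : c ∈ Set.Icc t₀ T := hIccsub hcS.1
    have hceq : c = t := by
      by_contra hne
      have hclt : c < t := lt_of_le_of_ne hct hne
      have hμRc : 0 < μ (R c) := hμpos _ (hRge c hcmemT)
      have hcontc : ContinuousWithinAt (fun u => μ (R u)) (Set.Icc t₀ t) c := by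
        have := (hμc.comp (hRcont.mono hIccsub)
          (fun u hu => hRge u (hIccsub hu))) c hcS.1
        exact this
      have hlt : μ (R c) < (1 + ε) * μ (R c) := by nlinarith
      have hev : (fun u => μ (R u)) ⁻¹' Set.Iio ((1 + ε) * μ (R c)) ∈
          nhdsWithin c (Set.Icc t₀ t) := hcontc (Iio_mem_nhds hlt)
      rw [Metric.mem_nhdsWithin_iff] at hev
      obtain ⟨δ, hδ, hball⟩ := hev
      set t' := min (c + δ / 2) t with ht'def
      have hct' : c < t' := lt_min (by linarith) hclt
      have ht't : t' ≤ t := min_le_right _ _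
      have ht'mem : t' ∈ Set.Icc t₀ t := ⟨hct₀.trans hct'.le, ht't⟩
      have ht'ball : t' ∈ Metric.ball c δ := by
        rw [Metric.mem_ball, Real.dist_eq, abs_of_pos (by linarith)]
        have : t' ≤ c + δ / 2 := min_le_left _ _
        linarith
      have hμRt' : μ (R t') ≤ (1 + ε) * μ (R c) :=
        le_of_lt (hball ⟨ht'ball, ht'mem⟩)
      have hstep := step c t' hct₀ hct'.le (ht't.trans htT)
      have hratio : μ (R t') / μ (R c) ≤ 1 + ε := by
        rw [div_le_iff₀ hμRc]
        linarith
      have hGct' : 0 ≤ G t' - G c := by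
        have := hGmono c t' hct₀ hct'.le (ht't.trans htT)
        linarith
      have ht'S : t' ∈ S := by
        refine ⟨ht'mem, ?_⟩
        simp only [Set.mem_setOf_eq]
        have hcS2 : M (R c) - (1 + ε) * G c ≤ M C := hcS.2
        have h7 : (μ (R t') / μ (R c)) * (G t' - G c) ≤ (1 + ε) * (G t' - G c) :=
          mul_le_mul_of_nonneg_right hratio hGct'
        nlinarith
      have : t' ≤ c := le_csSup hScompact.bddAbove ht'S
      linarith
    have := hcS.2
    rw [hceq] at this
    simp only [Set.mem_setOf_eq] at this
    linarith
  -- conclude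
  have hmain : M (R t) ≤ M C + G t := by
    by_contra hcon
    push_neg at hcon
    rcases eq_or_lt_of_le hGt with hG0 | hGpos
    · have := key 1 one_pos
      rw [← hG0] at this
      simp at this
      rw [← hG0] at hcon
      simp at hcon
      linarith
    · set d := M (R t) - (M C + G t) with hddef
      have hd : 0 < d := by simp only [hddef]; linarith
      have := key (d / (2 * G t)) (by positivity)
      have hexp : (1 + d / (2 * G t)) * G t = G t + d / 2 := by
        field_simp
      rw [hexp] at this
      simp only [hddef] at this
      linarith
  have hρt : a ≤ ρ t := hρa t ⟨ht₀, htT⟩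
  have hρRt : ρ t ≤ R t := hρ t ⟨ht₀, htT⟩
  have := (hMmono (R t) (ρ t) hρt hρRt).trans hmain
  exact this
end
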